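/- arXiv:2109.08212 — 2 statements merged into one kernel-verified Lean document; each statement's English description precedes it below -/
import Mathlib

section
/- Let φ be a structural set in ℝ_{0,m} and let a_k ∈ ℝ_{0,m}^{(k)} be a k-grade multivector. Then Ψⱼ^{φ,φ}(a_k) = (-1)^{j(k+1)} Σᵢ binom(m-k, j-i) binom(k, i) (-1)ⁱ a_k, where the sum runs over max{0, j+k-m} ≤ i ≤ min{j, k}. -/
/-!
For the standard basis everything is explicit: conjugating `e_B` by `eᵢ` multiplies it by
`(-1)^|B|` if `i ∈ B` and by `(-1)^(|B|+1)` otherwise, so `e_A e_B ê_A = (∏_{i ∈ A} σᵢ) e_B`.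
Summing over `|A| = j` gives the coefficient of `X^j` in
`(1 + (-1)^k X)^k (1 + (-1)^(k+1) X)^(m-k)`, which is the stated alternating sum.

A general structural set reduces to the standard basis. Conjugation by `φⁱ` sends the summand
`φ_A a φ̂_A` to the summand indexed by `A △ {i}`, whence the recurrence
`Σᵢ φⁱ Ψ_{n+1}(a) φⁱ = (n+2) Ψ_{n+2}(a) + (m-n) Ψ_n(a)`. Its left side is `Ψ₁` applied to
`Ψ_{n+1}(a)`, and `Ψ₁` does not depend on the orthonormal basis, so neither does any `Ψ_n`.
-/

open CliffordAlgebra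

noncomputable section

/-- The quadratic form of `ℝ_{0,m}`: negative definite on `ℝ^m`. -/
abbrev Qf (m : ℕ) : QuadraticForm ℝ (Fin m → ℝ) :=
  QuadraticMap.weightedSumSquares ℝ (fun _ : Fin m => (-1 : ℝ))

/-- The real Clifford algebra `ℝ_{0,m}`. -/
abbrev Cl (m : ℕ) := CliffordAlgebra (Qf m)

/-- A structural set: an orthonormal basis `ψ¹,…,ψᵐ` of `ℝᵐ`. -/
def IsStructuralSet {m : ℕ} (ψ : Fin m → (Fin m → ℝ)) : Prop :=
  ∀ i j, (∑ t, ψ i t * ψ j t) = if i = j then (1 : ℝ) else 0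

/-- The ordered product `ψ_A = ψ^{j₁} ⋯ ψ^{j_k}` for `A = {j₁ < ⋯ < j_k}`. -/
def prodS {m : ℕ} (ψ : Fin m → (Fin m → ℝ)) (A : Finset (Fin m)) : Cl m :=
  ((A.sort (· ≤ ·)).map (fun i => ι (Qf m) (ψ i))).prod

/-- The operator `Ψ_k^{φ,ψ}(a) = Σ_{|A|=k} φ_A a ψ̂_A`. -/
def PsiK {m : ℕ} (φ ψ : Fin m → (Fin m → ℝ)) (k : ℕ) (a : Cl m) : Cl m :=
  ∑ A ∈ Finset.univ.filter (fun A : Finset (Fin m) => A.card = k),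
    prodS φ A * a * reverse (prodS ψ A)

/-- `Ψ₊ = Σ_{k even} Ψ_k`. -/
def PsiPlus {m : ℕ} (φ ψ : Fin m → (Fin m → ℝ)) (a : Cl m) : Cl m :=
  ∑ k ∈ (Finset.range (m + 1)).filter (fun k => Even k), PsiK φ ψ k a

/-- `Ψ₋ = Σ_{k odd} Ψ_k`. -/
def PsiMinus {m : ℕ} (φ ψ : Fin m → (Fin m → ℝ)) (a : Cl m) : Cl m :=
  ∑ k ∈ (Finset.range (m + 1)).filter (fun k => Odd k), PsiK φ ψ k a

/-- `Ψ₁^{φ,ψ}(a) = Σⱼ φʲ a ψʲ`. -/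
def Psi1 {m : ℕ} (φ ψ : Fin m → (Fin m → ℝ)) (a : Cl m) : Cl m :=
  ∑ j, ι (Qf m) (φ j) * a * ι (Qf m) (ψ j)

/-- The standard basis of `ℝᵐ`. -/
def stdB {m : ℕ} (i : Fin m) : Fin m → ℝ := Pi.single i 1

/-- The basis multivector `e_A`. -/
def eA {m : ℕ} (A : Finset (Fin m)) : Cl m := prodS stdB A

/-- The element with coefficients `c` in the multivector basis. -/
def toCl {m : ℕ} (c : Finset (Fin m) → ℝ) : Cl m := ∑ A, c A • eA A

/-- The space `ℝ_{0,m}^{(k)}` of `k`-grade multivectors. -/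
def gradeK (m k : ℕ) : Submodule ℝ (Cl m) :=
  Submodule.span ℝ {x | ∃ A : Finset (Fin m), A.card = k ∧ x = eA A}

/-- Coefficient functions of `ℝ_{0,m}`-valued maps. -/
abbrev Coef (m : ℕ) := Finset (Fin m) → ℝ

/-- The coefficients of the even part `f₊`. -/
def cEven {m : ℕ} (c : Coef m) : Coef m := fun A => if Even A.card then c A else 0

/-- The coefficients of the odd part `f₋`. -/
def cOdd {m : ℕ} (c : Coef m) : Coef m := fun A => if Odd A.card then c A else 0

/-- The even part of a Clifford number. -/
def evenPart {m : ℕ} (a : Cl m) : Cl m :=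
  (DirectSum.decompose (evenOdd (Qf m)) a 0 : evenOdd (Qf m) 0)

/-- The odd part of a Clifford number. -/
def oddPart {m : ℕ} (a : Cl m) : Cl m :=
  (DirectSum.decompose (evenOdd (Qf m)) a 1 : evenOdd (Qf m) 1)

/-- Partial derivative `∂F/∂xᵢ` of a coefficient function. -/
def pd {m : ℕ} (i : Fin m) (F : (Fin m → ℝ) → Coef m) : (Fin m → ℝ) → Coef m :=
  fun x => fderiv ℝ F x (Pi.single i 1)

/-- The sandwich operator `φ∂[f]ψ∂ = Σᵢⱼ φⁱ (∂²f/∂xᵢ∂xⱼ) ψʲ` for `f = Σ_A F_A e_A`. -/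
def sandwichD {m : ℕ} (φ ψ : Fin m → (Fin m → ℝ)) (F : (Fin m → ℝ) → Coef m)
    (x : Fin m → ℝ) : Cl m :=
  ∑ i, ∑ j, ι (Qf m) (φ i) * toCl (pd i (pd j F) x) * ι (Qf m) (ψ j)

/-- The operator `φ∂[ψ∂[f]] = Σᵢⱼ φⁱ ψʲ ∂²f/∂xᵢ∂xⱼ`. -/
def ddD {m : ℕ} (φ ψ : Fin m → (Fin m → ℝ)) (F : (Fin m → ℝ) → Coef m)
    (x : Fin m → ℝ) : Cl m :=
  ∑ i, ∑ j, ι (Qf m) (φ i) * (ι (Qf m) (ψ j) * toCl (pd i (pd j F) x))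

/-- The componentwise Laplacian `Δf = Σᵢ ∂²f/∂xᵢ²`. -/
def lapD {m : ℕ} (F : (Fin m → ℝ) → Coef m) (x : Fin m → ℝ) : Cl m :=
  ∑ i, toCl (pd i (pd i F) x)

section Quadratic

variable {m : ℕ}

theorem Qf_apply (v : Fin m → ℝ) : Qf m v = -∑ t, v t * v t := by
  simp [QuadraticMap.weightedSumSquares_apply]

theorem polar_Qf (v w : Fin m → ℝ) :
    QuadraticMap.polar (Qf m) v w = -(2 * ∑ t, v t * w t) := by
  simp only [QuadraticMap.polar, Qf_apply, Pi.add_apply, Finset.mul_sum,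
    ← Finset.sum_neg_distrib, ← Finset.sum_sub_distrib]
  exact Finset.sum_congr rfl fun t _ => by ring

end Quadratic

theorem isStructuralSet_stdB {m : ℕ} : IsStructuralSet (stdB : Fin m → (Fin m → ℝ)) := by
  intro i j
  simp [stdB, Pi.single_apply, eq_comm]

def sandwich {m : ℕ} (φ : Fin m → (Fin m → ℝ)) (A : Finset (Fin m)) (a : Cl m) : Cl m :=
  prodS φ A * a * reverse (prodS φ A)

theorem psiK_eq_sum_sandwich {m : ℕ} (φ : Fin m → (Fin m → ℝ)) (n : ℕ) (a : Cl m) :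
    PsiK φ φ n a = ∑ A ∈ Finset.univ.filter (fun A : Finset (Fin m) => A.card = n),
      sandwich φ A a := rfl

namespace IsStructuralSet

variable {m : ℕ} {φ : Fin m → (Fin m → ℝ)}

theorem ι_mul_ι_self (hφ : IsStructuralSet φ) (i : Fin m) :
    ι (Qf m) (φ i) * ι (Qf m) (φ i) = -1 := by
  rw [ι_sq_scalar, Qf_apply, hφ i i]
  simp

theorem ι_mul_ι_of_ne (hφ : IsStructuralSet φ) {i j : Fin m} (h : i ≠ j) :
    ι (Qf m) (φ i) * ι (Qf m) (φ j) = -(ι (Qf m) (φ j) * ι (Qf m) (φ i)) := by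
  refine eq_neg_of_add_eq_zero_left ?_
  rw [ι_mul_ι_add_swap, polar_Qf, hφ i j, if_neg h]
  simp

theorem list_prod_perm (hφ : IsStructuralSet φ) {l₁ l₂ : List (Fin m)} (h : l₁.Perm l₂)
    (hl : l₁.Nodup) :
    (l₁.map fun i => ι (Qf m) (φ i)).prod = (l₂.map fun i => ι (Qf m) (φ i)).prod ∨
      (l₁.map fun i => ι (Qf m) (φ i)).prod = -(l₂.map fun i => ι (Qf m) (φ i)).prod := by
  induction h with
  | nil => exact .inl rfl
  | cons x _ ih =>
    rcases ih hl.of_cons with h | h <;> simp [h]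
  | swap x y l =>
    have hxy : y ≠ x := by simp_all
    right
    simp [← mul_assoc, hφ.ι_mul_ι_of_ne hxy]
  | trans h₁₂ _ ih₁₂ ih₂₃ =>
    rcases ih₁₂ hl with h | h <;> rcases ih₂₃ (h₁₂.nodup_iff.mp hl) with h' | h' <;>
      simp [h, h']

theorem list_prod_mul_ι (hφ : IsStructuralSet φ) (i : Fin m) {l : List (Fin m)}
    (hl : l.Nodup) :
    (l.map fun i => ι (Qf m) (φ i)).prod * ι (Qf m) (φ i) =
      (if i ∈ l then (-1 : ℝ) ^ (l.length + 1) else (-1) ^ l.length) •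
        (ι (Qf m) (φ i) * (l.map fun i => ι (Qf m) (φ i)).prod) := by
  induction l with
  | nil => simp
  | cons j l ih =>
    obtain ⟨hjl, hl⟩ := List.nodup_cons.mp hl
    rcases eq_or_ne j i with rfl | hji
    · simp [mul_assoc, ih hl, hjl, pow_succ]
    · rw [List.map_cons, List.prod_cons, mul_assoc, ih hl, mul_smul_comm, ← mul_assoc,
        hφ.ι_mul_ι_of_ne hji, neg_mul, mul_assoc, smul_neg, ← neg_smul]
      simp only [List.mem_cons, hji.symm, false_or, List.length_cons]
      split_ifs <;> simp [pow_succ]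

theorem prodS_insert (hφ : IsStructuralSet φ) {i : Fin m} {A : Finset (Fin m)} (hi : i ∉ A) :
    prodS φ (insert i A) = ι (Qf m) (φ i) * prodS φ A ∨
      prodS φ (insert i A) = -(ι (Qf m) (φ i) * prodS φ A) := by
  have hperm : ((insert i A).sort (· ≤ ·)).Perm (i :: A.sort (· ≤ ·)) :=
    ((Finset.sort_perm_toList _ _).trans (Finset.toList_insert hi)).trans
      ((Finset.sort_perm_toList _ _).symm.cons i)
  simpa [prodS] using hφ.list_prod_perm hperm (Finset.sort_nodup _ _)

theorem ι_mul_prodS_mul_ι (hφ : IsStructuralSet φ) (i : Fin m) (B : Finset (Fin m)) :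
    ι (Qf m) (φ i) * prodS φ B * ι (Qf m) (φ i) =
      (if i ∈ B then (-1 : ℝ) ^ B.card else (-1) ^ (B.card + 1)) • prodS φ B := by
  have hmove := hφ.list_prod_mul_ι i (Finset.sort_nodup B (· ≤ ·))
  simp only [Finset.mem_sort, Finset.length_sort] at hmove
  rw [mul_assoc, prodS, hmove, mul_smul_comm, ← mul_assoc, hφ.ι_mul_ι_self, neg_one_mul,
    smul_neg, ← neg_smul]
  split_ifs <;> simp [pow_succ]

theorem sandwich_insert (hφ : IsStructuralSet φ) {i : Fin m} {A : Finset (Fin m)} (hi : i ∉ A)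
    (a : Cl m) :
    sandwich φ (insert i A) a = ι (Qf m) (φ i) * sandwich φ A a * ι (Qf m) (φ i) := by
  rcases hφ.prodS_insert hi with h | h <;>
    simp only [sandwich, h, map_neg, reverse.map_mul, reverse_ι, neg_mul, mul_neg, neg_neg,
      mul_assoc]

theorem ι_mul_sandwich_mul_ι_of_mem (hφ : IsStructuralSet φ) {i : Fin m} {A : Finset (Fin m)}
    (hi : i ∈ A) (a : Cl m) :
    ι (Qf m) (φ i) * sandwich φ A a * ι (Qf m) (φ i) = sandwich φ (A.erase i) a := by
  rw [← Finset.insert_erase hi, hφ.sandwich_insert (Finset.notMem_erase i A),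
    Finset.erase_insert (Finset.notMem_erase i A), ← mul_assoc, ← mul_assoc, hφ.ι_mul_ι_self,
    mul_assoc _ _ (ι (Qf m) (φ i)), hφ.ι_mul_ι_self]
  simp

theorem sandwich_prodS (hφ : IsStructuralSet φ) (A B : Finset (Fin m)) :
    sandwich φ A (prodS φ B) =
      (∏ i ∈ A, if i ∈ B then (-1 : ℝ) ^ B.card else (-1) ^ (B.card + 1)) • prodS φ B := by
  induction A using Finset.induction_on with
  | empty => simp [sandwich, prodS]
  | insert i A hi ih =>
    rw [hφ.sandwich_insert hi, ih, mul_smul_comm, smul_mul_assoc, hφ.ι_mul_prodS_mul_ι,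
      smul_smul, Finset.prod_insert hi, mul_comm]

theorem sum_apply_mul_apply (hφ : IsStructuralSet φ) (t s : Fin m) :
    ∑ i, φ i t * φ i s = if t = s then 1 else 0 := by
  have hrows : Matrix.of φ * (Matrix.of φ).transpose = 1 := by
    ext i j
    simp [Matrix.mul_apply, Matrix.one_apply, hφ i j]
  have hcols : (Matrix.of φ).transpose * Matrix.of φ = 1 := mul_eq_one_comm.mp hrows
  simpa [Matrix.mul_apply, Matrix.one_apply] using congrFun₂ hcols t s

theorem psi1_eq_psi1_stdB (hφ : IsStructuralSet φ) (a : Cl m) :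
    Psi1 φ φ a = Psi1 stdB stdB a := by
  have hexp : ∀ i, ι (Qf m) (φ i) = ∑ t, φ i t • ι (Qf m) (stdB t) := by
    intro i
    simp_rw [← map_smul, ← map_sum]
    congr 1
    ext s
    simp [stdB, Pi.single_apply]
  calc Psi1 φ φ a
      = ∑ i, ∑ s, ∑ t, (φ i s * φ i t) • (ι (Qf m) (stdB t) * a * ι (Qf m) (stdB s)) := by
        simp only [Psi1, hexp, Finset.sum_mul, Finset.mul_sum, smul_mul_assoc, mul_smul_comm,
          Finset.smul_sum, smul_smul]
    _ = ∑ s, ∑ t, (∑ i, φ i s * φ i t) • (ι (Qf m) (stdB t) * a * ι (Qf m) (stdB s)) := by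
        simp only [Finset.sum_smul]
        rw [Finset.sum_comm]
        exact Finset.sum_congr rfl fun t _ => Finset.sum_comm
    _ = Psi1 stdB stdB a := by
        simp [Psi1, hφ.sum_apply_mul_apply]

end IsStructuralSet

section DoubleCounting

variable {α M : Type*} [Fintype α] [DecidableEq α] [AddCommMonoid M]

theorem Finset.sum_filter_notMem_insert (i : α) (n : ℕ) (g : Finset α → M) :
    ∑ A ∈ (Finset.univ.filter fun A : Finset α => A.card = n).filter (i ∉ ·), g (insert i A) =
      ∑ C ∈ (Finset.univ.filter fun C : Finset α => C.card = n + 1).filter (i ∈ ·), g C := by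
  refine Finset.sum_nbij' (insert i) (Finset.erase · i) ?_ ?_ ?_ ?_ (fun _ _ => rfl) <;>
    intro A hA <;> simp_all [Finset.card_insert_of_notMem, Finset.card_erase_of_mem]

theorem Finset.sum_sum_filter_comm {ι κ : Type*} (s : Finset ι) (t : Finset κ)
    (p : ι → κ → Prop) [∀ i k, Decidable (p i k)] (f : κ → M) :
    ∑ i ∈ s, ∑ k ∈ t.filter (p i), f k = ∑ k ∈ t, (s.filter (p · k)).card • f k := by
  simp only [Finset.sum_filter]
  rw [Finset.sum_comm]
  refine Finset.sum_congr rfl fun k _ => ?_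
  rw [← Finset.sum_filter, Finset.sum_const]

end DoubleCounting

section Counting

open Finset Polynomial

variable {ι R : Type*} [CommSemiring R]

theorem Polynomial.coeff_prod_one_add_C_mul_X (s : Finset ι) (f : ι → R) (n : ℕ) :
    (∏ i ∈ s, (1 + C (f i) * X)).coeff n = ∑ t ∈ s.powersetCard n, ∏ i ∈ t, f i := by
  classical
  simp only [Finset.prod_one_add, Finset.prod_mul_distrib, Finset.prod_const, ← map_prod,
    finsetSum_coeff, coeff_C_mul_X_pow, Finset.powersetCard_eq_filter, Finset.sum_filter,
    eq_comm]

theorem Polynomial.coeff_one_add_C_mul_X_pow (r : R) (k n : ℕ) :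
    ((1 + C r * X) ^ k).coeff n = k.choose n * r ^ n := by
  have h := coeff_prod_one_add_C_mul_X (Finset.range k) (fun _ => r) n
  simp only [Finset.prod_const, Finset.card_range] at h
  rw [h, Finset.sum_congr rfl fun t ht => by rw [(Finset.mem_powersetCard.mp ht).2],
    Finset.sum_const, Finset.card_powersetCard, Finset.card_range, nsmul_eq_mul]

theorem Finset.sum_card_eq_prod_ite_mem [Fintype ι] [DecidableEq ι] (B : Finset ι) (u v : R)
    (n : ℕ) :
    ∑ A ∈ Finset.univ.filter (fun A : Finset ι => A.card = n),
        ∏ i ∈ A, (if i ∈ B then u else v) =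
      ∑ p ∈ antidiagonal n,
        (B.card.choose p.1 * u ^ p.1) * ((Fintype.card ι - B.card).choose p.2 * v ^ p.2) := by
  have hsplit : ∏ i, (1 + C (if i ∈ B then u else v) * X) =
      (1 + C u * X) ^ B.card * (1 + C v * X) ^ (Fintype.card ι - B.card) := by
    rw [← Finset.prod_mul_prod_compl B, ← Finset.card_compl]
    congr 1 <;> refine Finset.prod_eq_pow_card fun i hi => ?_
    · rw [if_pos hi]
    · rw [if_neg (Finset.mem_compl.mp hi)]
  rw [Finset.univ_filter_card_eq, ← coeff_prod_one_add_C_mul_X, hsplit, coeff_mul]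
  simp only [coeff_one_add_C_mul_X_pow]

theorem sum_antidiagonal_choose_neg_one_pow {m k : ℕ} (hkm : k ≤ m) (n : ℕ) :
    ∑ p ∈ antidiagonal n,
        (k.choose p.1 * ((-1 : ℝ) ^ k) ^ p.1) * ((m - k).choose p.2 * ((-1) ^ (k + 1)) ^ p.2) =
      (-1) ^ (n * (k + 1)) * ∑ i ∈ Finset.Icc (n + k - m) (min n k),
        ((m - k).choose (n - i) : ℝ) * (k.choose i : ℝ) * (-1) ^ i := by
  rw [Finset.Nat.sum_antidiagonal_eq_sum_range_succ_mk, Finset.mul_sum]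
  refine (Finset.sum_subset (fun i hi => ?_) (fun i hi hi' => ?_)).symm.trans
    (Finset.sum_congr rfl fun i hi => ?_)
  · simp only [Finset.mem_Icc, Finset.mem_range] at hi ⊢
    omega
  · simp only [Finset.mem_Icc, Finset.mem_range, not_and_or, not_le, min_lt_iff] at hi hi'
    dsimp only
    rcases hi' with h | h | h
    · rw [Nat.choose_eq_zero_of_lt (by omega : m - k < n - i)]
      simp
    · omega
    · rw [Nat.choose_eq_zero_of_lt h]
      simp
  · obtain ⟨d, rfl⟩ : ∃ d, n = i + d :=
      ⟨n - i, by simp only [Finset.mem_Icc] at hi; omega⟩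
    have hsign : ((-1 : ℝ) ^ k) ^ i * ((-1) ^ (k + 1)) ^ d =
        (-1) ^ ((i + d) * (k + 1)) * (-1) ^ i := by
      rw [← pow_mul, ← pow_mul, ← pow_add, ← pow_add,
        show (i + d) * (k + 1) + i = k * i + (k + 1) * d + 2 * i by ring,
        pow_add (-1 : ℝ) _ (2 * i), pow_mul, neg_one_sq, one_pow, mul_one]
    simp only [Nat.add_sub_cancel_left]
    linear_combination ((k.choose i : ℝ) * ((m - k).choose d : ℝ)) * hsign

end Counting

section PsiK

variable {m : ℕ}

theorem psiK_zero (φ ψ : Fin m → (Fin m → ℝ)) (a : Cl m) : PsiK φ ψ 0 a = a := by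
  simp [PsiK, Finset.card_eq_zero, Finset.filter_eq', prodS]

theorem psiK_one (φ ψ : Fin m → (Fin m → ℝ)) (a : Cl m) : PsiK φ ψ 1 a = Psi1 φ ψ a := by
  rw [PsiK, ← Finset.powerset_univ, ← Finset.powersetCard_eq_filter, Finset.powersetCard_one,
    Finset.sum_map]
  simp [Psi1, prodS]

theorem psiK_add (φ ψ : Fin m → (Fin m → ℝ)) (n : ℕ) (a b : Cl m) :
    PsiK φ ψ n (a + b) = PsiK φ ψ n a + PsiK φ ψ n b := by
  simp only [PsiK, mul_add, add_mul, Finset.sum_add_distrib]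

theorem psiK_smul (φ ψ : Fin m → (Fin m → ℝ)) (n : ℕ) (r : ℝ) (a : Cl m) :
    PsiK φ ψ n (r • a) = r • PsiK φ ψ n a := by
  simp only [PsiK, mul_smul_comm, smul_mul_assoc, Finset.smul_sum]

theorem IsStructuralSet.psi1_psiK_succ {φ : Fin m → (Fin m → ℝ)} (hφ : IsStructuralSet φ)
    (n : ℕ) (a : Cl m) :
    Psi1 φ φ (PsiK φ φ (n + 1) a) = (n + 2) • PsiK φ φ (n + 2) a + (m - n) • PsiK φ φ n a := by
  have hsplit : ∀ i, ι (Qf m) (φ i) * PsiK φ φ (n + 1) a * ι (Qf m) (φ i) =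
      ∑ D ∈ (Finset.univ.filter fun D : Finset (Fin m) => D.card = n).filter (i ∉ ·),
          sandwich φ D a +
        ∑ C ∈ (Finset.univ.filter fun C : Finset (Fin m) => C.card = n + 2).filter (i ∈ ·),
          sandwich φ C a := by
    intro i
    have hers := Finset.sum_filter_notMem_insert i n (fun C => sandwich φ (C.erase i) a)
    rw [Finset.sum_congr rfl fun D hD => by
      rw [Finset.erase_insert (Finset.mem_filter.mp hD).2]] at hers
    rw [psiK_eq_sum_sandwich, Finset.mul_sum, Finset.sum_mul,
      ← Finset.sum_filter_add_sum_filter_not _ (i ∈ ·), hers,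
      ← Finset.sum_filter_notMem_insert i (n + 1)]
    congr 1
    · refine Finset.sum_congr rfl fun A hA => ?_
      exact hφ.ι_mul_sandwich_mul_ι_of_mem (Finset.mem_filter.mp hA).2 a
    · refine Finset.sum_congr rfl fun A hA => ?_
      exact (hφ.sandwich_insert (Finset.mem_filter.mp hA).2 a).symm
  have hcard_notMem : ∀ D : Finset (Fin m), D.card = n →
      (Finset.univ.filter (· ∉ D)).card = m - n := by
    intro D hD
    rw [Finset.filter_notMem_eq_sdiff, Finset.card_univ_sdiff, Fintype.card_fin, hD]
  rw [Psi1, Finset.sum_congr rfl fun i _ => hsplit i, Finset.sum_add_distrib,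
    Finset.sum_sum_filter_comm, Finset.sum_sum_filter_comm, add_comm, psiK_eq_sum_sandwich,
    psiK_eq_sum_sandwich, Finset.smul_sum, Finset.smul_sum]
  congr 1 <;> refine Finset.sum_congr rfl fun A hA => ?_ <;>
    rw [Finset.mem_filter] at hA
  · rw [Finset.filter_mem_eq_inter, Finset.univ_inter, hA.2]
  · rw [hcard_notMem A hA.2]

theorem IsStructuralSet.psiK_eq_psiK_stdB {φ : Fin m → (Fin m → ℝ)} (hφ : IsStructuralSet φ)
    (n : ℕ) (a : Cl m) : PsiK φ φ n a = PsiK stdB stdB n a := by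
  induction n using Nat.twoStepInduction with
  | zero => rw [psiK_zero, psiK_zero]
  | one => rw [psiK_one, psiK_one, hφ.psi1_eq_psi1_stdB]
  | more n ihn ihn1 =>
    have hrec := hφ.psi1_psiK_succ n a
    rw [ihn1, hφ.psi1_eq_psi1_stdB, isStructuralSet_stdB.psi1_psiK_succ, ihn] at hrec
    simp only [← Nat.cast_smul_eq_nsmul ℝ] at hrec
    exact (smul_right_injective (Cl m) (by positivity) (add_right_cancel hrec)).symm

theorem IsStructuralSet.psiK_prodS {φ : Fin m → (Fin m → ℝ)} (hφ : IsStructuralSet φ)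
    {k : ℕ} {B : Finset (Fin m)} (hB : B.card = k) (n : ℕ) :
    PsiK φ φ n (prodS φ B) =
      ((-1 : ℝ) ^ (n * (k + 1)) * ∑ i ∈ Finset.Icc (n + k - m) (min n k),
        ((m - k).choose (n - i) : ℝ) * (k.choose i : ℝ) * (-1 : ℝ) ^ i) • prodS φ B := by
  have hkm : k ≤ m := hB ▸ (Finset.card_le_univ B).trans_eq (Fintype.card_fin m)
  rw [psiK_eq_sum_sandwich, Finset.sum_congr rfl fun A _ => hφ.sandwich_prodS A B,
    ← Finset.sum_smul, Finset.sum_card_eq_prod_ite_mem, Fintype.card_fin, hB,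
    sum_antidiagonal_choose_neg_one_pow hkm]

end PsiK

/-- `j + k - m` is truncated subtraction in `ℕ`, so the sum starts at `max {0, j + k - m}`. -/
theorem psiK_on_grade_general {m j k : ℕ} (φ : Fin m → (Fin m → ℝ))
    (hφ : IsStructuralSet φ)
    (a : Cl m) (ha : a ∈ gradeK m k) :
    PsiK φ φ j a =
      ((-1 : ℝ) ^ (j * (k + 1)) *
        ∑ i ∈ Finset.Icc (j + k - m) (min j k),
          ((m - k).choose (j - i) : ℝ) * (k.choose i : ℝ) * (-1 : ℝ) ^ i) • a := by
  induction ha using Submodule.span_induction with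
  | mem x hx =>
    obtain ⟨B, hB, rfl⟩ := hx
    rw [hφ.psiK_eq_psiK_stdB, eA, isStructuralSet_stdB.psiK_prodS hB]
  | zero => simp [PsiK]
  | add x y _ _ hx hy => rw [psiK_add, hx, hy, smul_add]
  | smul r x _ hx => rw [psiK_smul, hx, smul_comm]

/-- for a structural set `φ` and a `k`-grade multivector `a`,
`Ψⱼ^{φ,φ}(a) = (-1)^{j(k+1)} Σ_{i=max{0,j+k-m}}^{min{j,k}} C(m-k, j-i) C(k,i) (-1)ⁱ a`.
(In `ℕ`, `j + k - m` is truncated subtraction, which realizes `max {0, j+k-m}`.) -/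
theorem psiK_on_grade {m j k : ℕ} (φ : Fin m → (Fin m → ℝ))
    (hφ : IsStructuralSet φ) (hj : j ≤ m) (hk : k ≤ m)
    (a : Cl m) (ha : a ∈ gradeK m k) :
    PsiK φ φ j a =
      ((-1 : ℝ) ^ (j * (k + 1)) *
        ∑ i ∈ Finset.Icc (j + k - m) (min j k),
          ((m - k).choose (j - i) : ℝ) * (k.choose i : ℝ) * (-1 : ℝ) ^ i) • a :=
  psiK_on_grade_general φ hφ a ha
end
end

section
/- Let φ, ψ be structural sets in ℝ_{0,m} and f: ℝᵐ → ℝ_{0,m} be C²-smooth. Then Ψ₁^{φ,ψ}(φ∂[ψ∂[f]]) = -2 ψ∂[f]ψ∂ - φ∂[Ψ₁^{φ,ψ}(ψ∂[f])]. -/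
/-!
Adding `φ∂[Ψ₁(ψ∂[f])]` to `Ψ₁(φ∂[ψ∂[f]])` pairs the terms `φᵏφⁱ(ψ∂ ∂ᵢf)ψᵏ` and
`φⁱφᵏ(ψ∂ ∂ᵢf)ψᵏ`; since `φ` is orthonormal, `φⁱφᵏ + φᵏφⁱ = -2δᵢₖ`, and the sum collapses to
`-2 Σᵢⱼ ψʲ ∂ᵢ∂ⱼf ψⁱ`, which is `-2 ψ∂[f]ψ∂` by the symmetry of second derivatives.
-/

open CliffordAlgebra

noncomputable section

lemma Qf_polar {m : ℕ} (u v : Fin m → ℝ) :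
    QuadraticMap.polar (Qf m) u v = -2 * ∑ t, u t * v t := by
  simp only [QuadraticMap.polar, QuadraticMap.weightedSumSquares_apply, Pi.add_apply,
    smul_eq_mul, Finset.mul_sum, ← Finset.sum_sub_distrib]
  exact Finset.sum_congr rfl fun t _ => by ring

lemma IsStructuralSet.ι_mul_ι_add_swap {m : ℕ} {φ : Fin m → (Fin m → ℝ)}
    (hφ : IsStructuralSet φ) (i k : Fin m) :
    ι (Qf m) (φ i) * ι (Qf m) (φ k) + ι (Qf m) (φ k) * ι (Qf m) (φ i)
      = if i = k then -2 else 0 := by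
  rw [CliffordAlgebra.ι_mul_ι_add_swap, Qf_polar, hφ]
  split_ifs <;> simp [map_ofNat]

theorem Psi1_sum_ι_mul_add_sum_ι_mul_Psi1 {m : ℕ} {φ : Fin m → (Fin m → ℝ)}
    (hφ : IsStructuralSet φ) (ψ : Fin m → (Fin m → ℝ)) (B : Fin m → Cl m) :
    Psi1 φ ψ (∑ i, ι (Qf m) (φ i) * B i) + ∑ i, ι (Qf m) (φ i) * Psi1 φ ψ (B i)
      = -2 • ∑ i, B i * ι (Qf m) (ψ i) := by
  have hterm : ∀ i k, ι (Qf m) (φ k) * (ι (Qf m) (φ i) * B i) * ι (Qf m) (ψ k)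
      + ι (Qf m) (φ i) * (ι (Qf m) (φ k) * B i * ι (Qf m) (ψ k))
      = (ι (Qf m) (φ i) * ι (Qf m) (φ k) + ι (Qf m) (φ k) * ι (Qf m) (φ i))
          * B i * ι (Qf m) (ψ k) := by
    intro i k; noncomm_ring
  simp only [Psi1, Finset.mul_sum, Finset.sum_mul]
  rw [Finset.sum_comm, ← Finset.sum_add_distrib]
  simp only [← Finset.sum_add_distrib, hterm, hφ.ι_mul_ι_add_swap, Finset.smul_sum]
  refine Finset.sum_congr rfl fun i _ => ?_
  simp [ite_mul, mul_assoc]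

lemma pd_comm {m : ℕ} {F : (Fin m → ℝ) → Coef m} (hF : ContDiff ℝ 2 F)
    (i j : Fin m) (x : Fin m → ℝ) : pd i (pd j F) x = pd j (pd i F) x := by
  have hd : Differentiable ℝ (fderiv ℝ F) :=
    (hF.fderiv_right (m := 1) (by norm_num)).differentiable (by norm_num)
  have hpd : ∀ u v : Fin m → ℝ,
      fderiv ℝ (fun z => fderiv ℝ F z u) x v = fderiv ℝ (fderiv ℝ F) x v u := fun u v => by
    rw [fderiv_clm_apply (hd x) (differentiableAt_const u)]
    simp
  have hsym := (hF.contDiffAt (x := x)).isSymmSndFDerivAt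
    (by simp [minSmoothness_of_isRCLikeNormedField])
  exact (hpd _ _).trans ((hsym _ _).trans (hpd _ _).symm)

theorem psi1_dd_general {m : ℕ} (φ ψ : Fin m → (Fin m → ℝ))
    (hφ : IsStructuralSet φ)
    (F : (Fin m → ℝ) → Coef m) (hF : ContDiff ℝ 2 F) :
    ∀ x : Fin m → ℝ,
      Psi1 φ ψ (ddD φ ψ F x)
        = -2 • sandwichD ψ ψ F x
            - ∑ i, ι (Qf m) (φ i) *
                Psi1 φ ψ (∑ j, ι (Qf m) (ψ j) * toCl (pd i (pd j F) x)) := by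
  intro x
  rw [eq_sub_iff_add_eq, ddD]
  simp only [← Finset.mul_sum]
  rw [Psi1_sum_ι_mul_add_sum_ι_mul_Psi1 hφ, sandwichD, Finset.sum_comm]
  simp only [Finset.sum_mul, pd_comm hF]

/-- for C²-smooth `f : ℝᵐ → ℝ_{0,m}`,
`Ψ₁^{φ,ψ}(φ∂[ψ∂[f]]) = -2 ψ∂[f]ψ∂ - φ∂[Ψ₁^{φ,ψ}(ψ∂[f])]`. -/
theorem psi1_dd {m : ℕ} (φ ψ : Fin m → (Fin m → ℝ))
    (hφ : IsStructuralSet φ) (hψ : IsStructuralSet ψ)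
    (F : (Fin m → ℝ) → Coef m) (hF : ContDiff ℝ 2 F) :
    ∀ x : Fin m → ℝ,
      Psi1 φ ψ (ddD φ ψ F x)
        = -2 • sandwichD ψ ψ F x
            - ∑ i, ι (Qf m) (φ i) *
                Psi1 φ ψ (∑ j, ι (Qf m) (ψ j) * toCl (pd i (pd j F) x)) :=
  psi1_dd_general φ ψ hφ F hF
end
end
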